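/- Suppose for each n in a finite set C and each i in an associated finite set Ω̃_n ⊆ C* we have v_i ≤ v_n Φ_i / Φ_n with v_n, Φ_n > 0; suppose ∑_{i∈Ω̃_n} Φ_i ≤ 2 and Φ_n ≥ c for a constant c > 0; and suppose C* ⊆ ⋃_{n∈C} Ω̃_n. Then ∑_{n∈C} v_n ≥ (c/2) ∑_{i∈C*} v_i. -/

import Mathlib

/-!
Since `Φ n ≥ c`, every optimal user `i` blocked by `n` has `v i ≤ v n Φ i / c`, so the users
blocked by `n` carry total value at most `(2 / c) v n`. The blocked sets cover `C*`, hence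
`∑_{C*} v ≤ (2 / c) ∑_C v`.
-/

open Finset

theorem Finset.sum_biUnion_le_sum_sum {ι α M : Type*} [DecidableEq α] [AddCommMonoid M]
    [PartialOrder M] [IsOrderedAddMonoid M] {f : α → M} (hf : ∀ x, 0 ≤ f x)
    (s : Finset ι) (t : ι → Finset α) :
    ∑ x ∈ s.biUnion t, f x ≤ ∑ i ∈ s, ∑ x ∈ t i, f x := by
  rw [← sup_eq_biUnion]
  refine s.apply_sup_le_sum (f := fun u ↦ ∑ x ∈ u, f x) sum_empty fun {u w} ↦ ?_
  calc ∑ x ∈ u ⊔ w, f x ≤ ∑ x ∈ u ∪ w, f x + ∑ x ∈ u ∩ w, f x :=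
        le_add_of_nonneg_right (sum_nonneg fun x _ ↦ hf x)
    _ = ∑ x ∈ u, f x + ∑ x ∈ w, f x := sum_union_inter

theorem Finset.sum_le_div_mul_of_le_mul_div {ι : Type*} {s : Finset ι} {v Φ : ι → ℝ}
    {a b L : ℝ} (ha : 0 ≤ a) (hb : 0 ≤ b) (hv : ∀ i ∈ s, v i ≤ a * Φ i / b)
    (hL : ∑ i ∈ s, Φ i ≤ L) :
    ∑ i ∈ s, v i ≤ a / b * L :=
  calc ∑ i ∈ s, v i ≤ ∑ i ∈ s, a / b * Φ i :=
        sum_le_sum fun i hi ↦ (hv i hi).trans_eq (mul_div_right_comm a (Φ i) b)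
    _ = a / b * ∑ i ∈ s, Φ i := (mul_sum s Φ (a / b)).symm
    _ ≤ a / b * L := by gcongr

theorem sum_le_div_mul_sum_of_covering {ι : Type*} [DecidableEq ι] {v Φ : ι → ℝ}
    {C Cstar : Finset ι} {Ω : ι → Finset ι} {c L : ℝ} (hc : 0 < c) (hL : 0 ≤ L)
    (hv : ∀ n, 0 ≤ v n) (hbound : ∀ n ∈ C, ∀ i ∈ Ω n, v i ≤ v n * Φ i / Φ n)
    (hload : ∀ n ∈ C, ∑ i ∈ Ω n, Φ i ≤ L) (hocc : ∀ n ∈ C, c ≤ Φ n)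
    (hcover : Cstar ⊆ C.biUnion Ω) :
    ∑ i ∈ Cstar, v i ≤ L / c * ∑ n ∈ C, v n := by
  have hblock (n : ι) (hn : n ∈ C) : ∑ i ∈ Ω n, v i ≤ L / c * v n :=
    calc ∑ i ∈ Ω n, v i ≤ v n / Φ n * L :=
          sum_le_div_mul_of_le_mul_div (hv n) (hc.le.trans (hocc n hn)) (hbound n hn)
            (hload n hn)
      _ ≤ v n / c * L := by gcongr; exacts [hv n, hocc n hn]
      _ = L / c * v n := by ring
  calc ∑ i ∈ Cstar, v i ≤ ∑ i ∈ C.biUnion Ω, v i :=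
        sum_le_sum_of_subset_of_nonneg hcover fun i _ _ ↦ hv i
    _ ≤ ∑ n ∈ C, ∑ i ∈ Ω n, v i := sum_biUnion_le_sum_sum hv C Ω
    _ ≤ ∑ n ∈ C, L / c * v n := sum_le_sum hblock
    _ = L / c * ∑ n ∈ C, v n := (mul_sum C v (L / c)).symm

theorem stmt_10_general (ι : Type) [DecidableEq ι] (v Φ : ι → ℝ)
    (C Cstar : Finset ι) (Ω : ι → Finset ι) (c : ℝ) (hc : 0 < c)
    (hv : ∀ n, 0 < v n)
    (hbound : ∀ n ∈ C, ∀ i ∈ Ω n, v i ≤ v n * Φ i / Φ n)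
    (hload : ∀ n ∈ C, ∑ i ∈ Ω n, Φ i ≤ 2)
    (hocc : ∀ n, c ≤ Φ n)
    (hcover : Cstar ⊆ C.biUnion Ω) :
    ∑ n ∈ C, v n ≥ c / 2 * ∑ i ∈ Cstar, v i := by
  have hcov := sum_le_div_mul_sum_of_covering hc zero_le_two (fun n ↦ (hv n).le) hbound hload
    (fun n _ ↦ hocc n) hcover
  calc c / 2 * ∑ i ∈ Cstar, v i ≤ c / 2 * (2 / c * ∑ n ∈ C, v n) := by gcongr
    _ = ∑ n ∈ C, v n := by field_simp

/-- Abstract covering lemma: if for each `n ∈ C` and each `i ∈ Ω̃ n ⊆ C*` we have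
`v_i ≤ v_n Φ_i / Φ_n`, the occupancies in each `Ω̃ n` sum to at most `2`, every
occupancy is at least `c > 0`, and the sets `Ω̃ n` cover `C*`, then
`∑_{n ∈ C} v_n ≥ (c/2) ∑_{i ∈ C*} v_i`. -/
theorem stmt_10 (ι : Type) [DecidableEq ι] (v Φ : ι → ℝ)
    (C Cstar : Finset ι) (Ω : ι → Finset ι) (c : ℝ) (hc : 0 < c)
    (hv : ∀ n, 0 < v n) (hΦ : ∀ n, 0 < Φ n)
    (hsub : ∀ n ∈ C, Ω n ⊆ Cstar)
    (hbound : ∀ n ∈ C, ∀ i ∈ Ω n, v i ≤ v n * Φ i / Φ n)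
    (hload : ∀ n ∈ C, ∑ i ∈ Ω n, Φ i ≤ 2)
    (hocc : ∀ n, c ≤ Φ n)
    (hcover : Cstar ⊆ C.biUnion Ω) :
    ∑ n ∈ C, v n ≥ c / 2 * ∑ i ∈ Cstar, v i :=
  stmt_10_general ι v Φ C Cstar Ω c hc hv hbound hload hocc hcover
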